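/- Let (X, Π) be a weighted pure d-dimensional simplicial complex. For every 0 ≤ k ≤ d−1, the operator inequality N_k − P∨_k ⪯_{Π_k} γ_{k−1} · (I − P∨_k) holds; that is, for every f ∈ ℝ^{X(k)}, ⟨f, (N_k − P∨_k) f⟩_{Π_k} ≤ γ_{k−1} · ⟨f, (I − P∨_k) f⟩_{Π_k}. -/

import Mathlib

open Finset

/-- A weighted pure `d`-dimensional simplicial complex on a finite ground set `V`.
Faces are finsets; a face of cardinality `m` has dimension `m - 1` (so `X(j)` is the
set of faces of cardinality `j + 1`).  The family of faces is downward closed, every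
face is contained in a face of cardinality `d + 1` (purity), and a probability
distribution `Π = Π_d` (positive weights summing to `1`) is given on the
top-dimensional faces. -/
structure WSC (V : Type*) [DecidableEq V] [Fintype V] (d : ℕ) where
  faces : Finset (Finset V)
  empty_mem : ∅ ∈ faces
  down_closed : ∀ β ∈ faces, ∀ α ⊆ β, α ∈ faces
  pure : ∀ α ∈ faces, ∃ β ∈ faces, α ⊆ β ∧ β.card = d + 1
  dim_le : ∀ α ∈ faces, α.card ≤ d + 1
  weight : Finset V → ℝ
  weight_pos : ∀ β ∈ faces, β.card = d + 1 → 0 < weight β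
  weight_zero : ∀ β : Finset V, β ∉ faces ∨ β.card ≠ d + 1 → weight β = 0
  weight_sum : ∑ β ∈ faces.filter (fun β => β.card = d + 1), weight β = 1

namespace WSC

variable {V : Type*} [DecidableEq V] [Fintype V] {d : ℕ}

/-- Auxiliary recursion for the marginal distributions: `Waux X t` is the marginal
distribution `Π_{d - t}` on faces of cardinality `d + 1 - t`, defined by
`Π_j(α) = (1/(j+2)) ∑_{β ∈ X(j+1), β ⊇ α} Π_{j+1}(β)`. -/
noncomputable def Waux (X : WSC V d) : ℕ → Finset V → ℝ
  | 0 => X.weight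
  | (t + 1) => fun α =>
      (1 / ((d + 1 - t : ℕ) : ℝ)) *
        ∑ β ∈ X.faces.filter (fun β => α ⊆ β ∧ β.card = d + 1 - t), X.Waux t β

/-- `X.W m α` is the marginal probability `Π_{m-1}(α)` of the face `α` of cardinality
`m` (dimension `m - 1`). -/
noncomputable def W (X : WSC V d) (m : ℕ) : Finset V → ℝ := X.Waux (d + 1 - m)

/-- The inner product `⟨f, g⟩_{Π_{m-1}}` on `ℝ^{X(m-1)}` (faces of cardinality `m`). -/
noncomputable def inn (X : WSC V d) (m : ℕ) (f g : Finset V → ℝ) : ℝ :=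
  ∑ α ∈ X.faces.filter (fun α => α.card = m), X.W m α * f α * g α

/-- The up operator `U_j`: `(U_j f)(β) = (1/(j+2)) ∑_{x ∈ β} f(β \ {x})`, for `β` of
cardinality `j + 2`.  (The formula is uniform in the cardinality of `β`.) -/
noncomputable def upOp (f : Finset V → ℝ) : Finset V → ℝ :=
  fun β => (1 / (β.card : ℝ)) * ∑ x ∈ β, f (β.erase x)

/-- The down operator `D_{j+1}`:
`(D_{j+1} g)(α) = ∑_{β ∈ X(j+1), β ⊇ α} Π_{j+1}(β) g(β) / ((j+2) Π_j(α))`, for `α` of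
cardinality `j + 1`.  (The formula is uniform in the cardinality of `α`.) -/
noncomputable def downOp (X : WSC V d) (g : Finset V → ℝ) : Finset V → ℝ :=
  fun α => ∑ β ∈ X.faces.filter (fun β => α ⊆ β ∧ β.card = α.card + 1),
      (X.W (α.card + 1) β * g β) / (((α.card : ℝ) + 1) * X.W α.card α)

/-- The down-up walk `P∨_k = U_{k-1} D_k`, acting on functions on `X(k)` (faces of
cardinality `k + 1`). -/
noncomputable def downUp (X : WSC V d) (f : Finset V → ℝ) : Finset V → ℝ :=
  upOp (X.downOp f)

/-- The up-down walk `P∧_k = D_{k+1} U_k`, acting on functions on `X(k)` (faces of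
cardinality `k + 1`). -/
noncomputable def upDown (X : WSC V d) (f : Finset V → ℝ) : Finset V → ℝ :=
  X.downOp (upOp f)

/-- The `k`-th non-lazy up-down walk `N_k = ((k+2)/(k+1)) (P∧_k - (1/(k+2)) I)`. -/
noncomputable def nonLazy (X : WSC V d) (k : ℕ) (f : Finset V → ℝ) : Finset V → ℝ :=
  fun α => (((k : ℝ) + 2) / ((k : ℝ) + 1)) * (X.upDown f α - (1 / ((k : ℝ) + 2)) * f α)

/-- The up-down walk `U_{a,b} = D_{a+1} ⋯ D_b · U_{b-1} ⋯ U_a` on `X(a)` through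
`X(b)`, where `t = b - a`. -/
noncomputable def upDownAB (X : WSC V d) (t : ℕ) (f : Finset V → ℝ) : Finset V → ℝ :=
  (X.downOp)^[t] (upOp^[t] f)

/-- The second largest eigenvalue of a row-stochastic operator `M` on `ℝ^{X(m-1)}`
(faces of cardinality `m`) which is self-adjoint with respect to `⟨·,·⟩_{Π_{m-1}}`
and has stationary distribution `Π_{m-1}`: by the variational principle it is the
supremum of the Rayleigh quotients of (nonzero) functions orthogonal to the
constant function `1`. -/
noncomputable def lam2 (X : WSC V d) (m : ℕ) (M : (Finset V → ℝ) → Finset V → ℝ) : ℝ :=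
  sSup { r : ℝ | ∃ f : Finset V → ℝ,
    X.inn m f (fun _ => 1) = 0 ∧ X.inn m f f ≠ 0 ∧
    r = X.inn m f (M f) / X.inn m f f }

/-- The vertices of the link `X_α`: those `x ∉ α` with `α ∪ {x} ∈ X`. -/
def linkVerts (X : WSC V d) (α : Finset V) : Finset V :=
  Finset.univ.filter (fun x => x ∉ α ∧ insert x α ∈ X.faces)

/-- The link distribution `Π^α_l(τ) = Π_{j+1+l}(α ∪ τ) / (C(|α ∪ τ|, |α|) · Π_j(α))`
for a face `α` of dimension `j` and `τ ∈ X_α(l)`. -/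
noncomputable def linkPi (X : WSC V d) (α τ : Finset V) : ℝ :=
  X.W (α ∪ τ).card (α ∪ τ) / ((Nat.choose (α ∪ τ).card α.card : ℝ) * X.W α.card α)

/-- The random walk matrix `M_α` of the graph of the link `X_α`, with entries
`M_α(x, y) = Π^α_1({x, y}) / (2 Π^α_0(x))` for `{x, y} ∈ X_α(1)` and `0` otherwise,
viewed as an operator on functions on the vertices of the link. -/
noncomputable def linkWalk (X : WSC V d) (α : Finset V) (f : V → ℝ) : V → ℝ :=
  fun x => ∑ y ∈ (X.linkVerts α).filter
      (fun y => y ≠ x ∧ insert y (insert x α) ∈ X.faces),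
    (X.linkPi α {x, y} / (2 * X.linkPi α {x})) * f y

/-- The projector `J_α` onto the constant functions on the link: `J_α g` is the
constant function with value `E_{x ∼ Π^α_0}[g(x)]`. -/
noncomputable def linkJ (X : WSC V d) (α : Finset V) (g : V → ℝ) : V → ℝ :=
  fun _ => ∑ x ∈ X.linkVerts α, X.linkPi α {x} * g x

/-- The inner product `⟨g, h⟩_{Π^α_0}` on functions on the vertices of the link. -/
noncomputable def linkInner (X : WSC V d) (α : Finset V) (g h : V → ℝ) : ℝ :=
  ∑ x ∈ X.linkVerts α, X.linkPi α {x} * g x * h x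

/-- The second largest eigenvalue `λ₂(M_α)` of the random walk matrix of the graph
of the link `X_α`, via the variational principle. -/
noncomputable def linkLam2 (X : WSC V d) (α : Finset V) : ℝ :=
  sSup { r : ℝ | ∃ f : V → ℝ,
    X.linkInner α f (fun _ => 1) = 0 ∧ X.linkInner α f f ≠ 0 ∧
    r = X.linkInner α f (X.linkWalk α f) / X.linkInner α f f }

/-- `X.gammaC m` is `γ_{m-1} = max_{α ∈ X(m-1)} λ₂(M_α)`, the maximum over faces `α`
of cardinality `m` (dimension `m - 1`) of the second eigenvalue of the link walk. -/
noncomputable def gammaC (X : WSC V d) (m : ℕ) : ℝ :=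
  sSup { r : ℝ | ∃ α ∈ X.faces, α.card = m ∧ r = X.linkLam2 α }

end WSC

/-!
Garland's method. For a face `α` of cardinality `k` write `f_α(x) = f(α ∪ {x})` on the vertices
of its link. All three quadratic forms localize to the links, averaged against `Π_{k-1}`:
`⟨f, f⟩ = 𝔼_α ⟨f_α, f_α⟩`, `⟨f, P∨_k f⟩ = 𝔼_α (𝔼 f_α)²` and `⟨f, N_k f⟩ = 𝔼_α ⟨f_α, M_α f_α⟩`.
The last one holds because `N_k f(β)` is the average of `f(β - x + y)` over `x ∈ β` and `y` in
the link of `β`, while `M_α f_α(x)` is the average of `f(α + y)` over `y` in the link of `α + x`.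
On each link, `M_α` is stochastic with stationary distribution `Π^α_0`, so centring `g = f_α` at
its mean `c` gives `⟨g, M_α g⟩ - c² = ⟨g - c, M_α (g - c)⟩ ≤ λ₂(M_α) ⟨g - c, g - c⟩
= λ₂(M_α) (⟨g, g⟩ - c²)`, and `λ₂(M_α) ≤ γ_{k-1}`.
-/

namespace WSC

variable {V : Type*} [DecidableEq V] [Fintype V] {d : ℕ} (X : WSC V d)

theorem weight_nonneg (β : Finset V) : 0 ≤ X.weight β := by
  by_cases h : β ∈ X.faces ∧ β.card = d + 1
  · exact (X.weight_pos β h.1 h.2).le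
  · rw [X.weight_zero β (by tauto)]

theorem W_nonneg (m : ℕ) (α : Finset V) : 0 ≤ X.W m α := by
  suffices ∀ t α, 0 ≤ X.Waux t α from this _ α
  intro t
  induction t with
  | zero => exact X.weight_nonneg
  | succ t ih => exact fun α => mul_nonneg (by positivity) (sum_nonneg fun β _ => ih β)

theorem sum_W_superfaces {m : ℕ} (hm : m ≤ d) (α : Finset V) :
    ∑ β ∈ X.faces.filter (fun β => α ⊆ β ∧ β.card = m + 1), X.W (m + 1) β =
      (m + 1) * X.W m α := by
  simp only [W]
  rw [show d + 1 - m = (d - m) + 1 by omega, Waux, show d + 1 - (d - m) = m + 1 by omega,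
    show d + 1 - (m + 1) = d - m by omega]
  push_cast
  field_simp

theorem W_pos {α : Finset V} (hα : α ∈ X.faces) : 0 < X.W α.card α := by
  obtain ⟨t, ht⟩ : ∃ t, α.card + t = d + 1 := ⟨d + 1 - α.card, by have := X.dim_le α hα; omega⟩
  induction t generalizing α with
  | zero =>
    rw [W, show d + 1 - α.card = 0 by omega]
    exact X.weight_pos α hα (by omega)
  | succ t ih =>
    obtain ⟨γ, hγ, hαγ, hγd⟩ := X.pure α hα
    obtain ⟨β, hαβ, hβγ, hβ⟩ :=
      exists_subsuperset_card_eq hαγ (n := α.card + 1) (by omega) (by omega)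
    have hβX : β ∈ X.faces := X.down_closed γ hγ β hβγ
    have hsum : 0 < ∑ β ∈ X.faces.filter (fun β => α ⊆ β ∧ β.card = α.card + 1),
        X.W (α.card + 1) β :=
      sum_pos' (fun _ _ => X.W_nonneg _ _)
        ⟨β, mem_filter.2 ⟨hβX, hαβ, hβ⟩, hβ ▸ ih hβX (by omega)⟩
    rw [X.sum_W_superfaces (by omega)] at hsum
    exact pos_of_mul_pos_right hsum (by positivity)

@[simp]
theorem mem_linkVerts {α : Finset V} {x : V} :
    x ∈ X.linkVerts α ↔ x ∉ α ∧ insert x α ∈ X.faces := by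
  simp [linkVerts]

theorem sum_superfaces_eq_sum_linkVerts (α : Finset V) (g : Finset V → ℝ) :
    ∑ β ∈ X.faces.filter (fun β => α ⊆ β ∧ β.card = α.card + 1), g β =
      ∑ x ∈ X.linkVerts α, g (insert x α) := by
  refine (sum_nbij (insert · α) (fun x hx => ?_) (fun x hx y _ hxy => ?_) (fun β hβ => ?_)
    fun _ _ => rfl).symm
  · obtain ⟨hxα, hxX⟩ := X.mem_linkVerts.1 hx
    exact mem_filter.2 ⟨hxX, subset_insert _ _, card_insert_of_notMem hxα⟩
  · exact (insert_inj (X.mem_linkVerts.1 hx).1).1 hxy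
  · obtain ⟨hβX, hαβ, hβ⟩ := mem_filter.1 hβ
    obtain ⟨x, hxα, rfl⟩ := exists_eq_insert_iff.2 ⟨hαβ, hβ.symm⟩
    exact ⟨x, X.mem_linkVerts.2 ⟨hxα, hβX⟩, rfl⟩

theorem sum_faces_sum_linkVerts (m : ℕ) (F : Finset V → V → ℝ) :
    ∑ α ∈ X.faces.filter (fun α => α.card = m), ∑ x ∈ X.linkVerts α, F α x =
      ∑ β ∈ X.faces.filter (fun β => β.card = m + 1), ∑ x ∈ β, F (β.erase x) x := by
  rw [sum_sigma', sum_sigma']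
  refine sum_nbij' (fun p => ⟨insert p.2 p.1, p.2⟩) (fun q => ⟨q.1.erase q.2, q.2⟩)
    ?_ ?_ ?_ ?_ ?_
  · rintro ⟨α, x⟩ hp
    simp only [mem_sigma, mem_filter, mem_linkVerts] at hp ⊢
    obtain ⟨⟨-, rfl⟩, hxα, hxX⟩ := hp
    exact ⟨⟨hxX, card_insert_of_notMem hxα⟩, mem_insert_self x α⟩
  · rintro ⟨β, x⟩ hq
    simp only [mem_sigma, mem_filter, mem_linkVerts] at hq ⊢
    obtain ⟨⟨hβX, hβ⟩, hx⟩ := hq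
    refine ⟨⟨X.down_closed β hβX _ (erase_subset x β), ?_⟩, notMem_erase x β, ?_⟩
    · rw [card_erase_of_mem hx, hβ, Nat.add_sub_cancel]
    · rwa [insert_erase hx]
  · rintro ⟨α, x⟩ hp
    simp only [mem_sigma, mem_linkVerts] at hp
    simp [erase_insert hp.2.1]
  · rintro ⟨β, x⟩ hq
    simp only [mem_sigma] at hq
    simp [insert_erase hq.2]
  · rintro ⟨α, x⟩ hp
    simp only [mem_sigma, mem_linkVerts] at hp
    simp [erase_insert hp.2.1]

theorem linkPi_singleton {α : Finset V} {x : V} (hx : x ∉ α) :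
    X.linkPi α {x} = X.W (α.card + 1) (insert x α) / ((α.card + 1) * X.W α.card α) := by
  rw [linkPi, union_comm, ← insert_eq, card_insert_of_notMem hx, Nat.choose_succ_self_right]
  push_cast
  rfl

theorem linkPi_nonneg (α τ : Finset V) : 0 ≤ X.linkPi α τ :=
  div_nonneg (X.W_nonneg _ _) (mul_nonneg (Nat.cast_nonneg _) (X.W_nonneg _ _))

theorem card_insert_of_mem_linkVerts {α : Finset V} {x : V} (hx : x ∈ X.linkVerts α) :
    (insert x α).card = α.card + 1 :=
  card_insert_of_notMem (X.mem_linkVerts.1 hx).1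

theorem linkPi_singleton_pos {α : Finset V} {x : V} (hx : x ∈ X.linkVerts α) :
    0 < X.linkPi α {x} := by
  obtain ⟨hxα, hxX⟩ := X.mem_linkVerts.1 hx
  rw [X.linkPi_singleton hxα]
  have hβ := X.W_pos hxX
  rw [card_insert_of_notMem hxα] at hβ
  exact div_pos hβ (mul_pos (by positivity) (X.W_pos (X.down_closed _ hxX α (subset_insert x α))))

theorem sum_linkPi_singleton {α : Finset V} (hα : α ∈ X.faces) (hd : α.card ≤ d) :
    ∑ x ∈ X.linkVerts α, X.linkPi α {x} = 1 := by
  have hW := X.W_pos hα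
  calc ∑ x ∈ X.linkVerts α, X.linkPi α {x}
      = ∑ x ∈ X.linkVerts α, X.W (α.card + 1) (insert x α) / ((α.card + 1) * X.W α.card α) :=
        sum_congr rfl fun x hx => X.linkPi_singleton (X.mem_linkVerts.1 hx).1
    _ = 1 := by
        rw [← sum_div, ← X.sum_superfaces_eq_sum_linkVerts, X.sum_W_superfaces hd]
        field_simp

noncomputable def linkMean (α : Finset V) (g : V → ℝ) : ℝ :=
  ∑ x ∈ X.linkVerts α, X.linkPi α {x} * g x

theorem linkInner_eq_linkMean (α : Finset V) (g h : V → ℝ) :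
    X.linkInner α g h = X.linkMean α (fun x => g x * h x) := by
  simp only [linkInner, linkMean, mul_assoc]

theorem linkMean_congr {α : Finset V} {g h : V → ℝ} (hgh : ∀ x ∈ X.linkVerts α, g x = h x) :
    X.linkMean α g = X.linkMean α h :=
  sum_congr rfl fun x hx => by rw [hgh x hx]

theorem linkMean_nonneg {α : Finset V} {g : V → ℝ} (hg : ∀ x ∈ X.linkVerts α, 0 ≤ g x) :
    0 ≤ X.linkMean α g :=
  sum_nonneg fun x hx => mul_nonneg (X.linkPi_nonneg α {x}) (hg x hx)

theorem linkMean_mono {α : Finset V} {g h : V → ℝ} (hgh : ∀ x ∈ X.linkVerts α, g x ≤ h x) :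
    X.linkMean α g ≤ X.linkMean α h :=
  sum_le_sum fun x hx => mul_le_mul_of_nonneg_left (hgh x hx) (X.linkPi_nonneg α {x})

theorem linkMean_add (α : Finset V) (g h : V → ℝ) :
    X.linkMean α (fun x => g x + h x) = X.linkMean α g + X.linkMean α h := by
  simp only [linkMean, mul_add, sum_add_distrib]

theorem linkMean_mul_const (α : Finset V) (g : V → ℝ) (c : ℝ) :
    X.linkMean α (fun x => g x * c) = X.linkMean α g * c := by
  simp only [linkMean, sum_mul, mul_assoc]

theorem linkMean_sum {ι : Type*} (α : Finset V) (s : Finset ι) (g : ι → V → ℝ) :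
    X.linkMean α (fun x => ∑ i ∈ s, g i x) = ∑ i ∈ s, X.linkMean α (g i) := by
  simp only [linkMean, mul_sum]
  exact sum_comm

theorem linkMean_sub_const {α : Finset V} (hα : α ∈ X.faces) (hd : α.card ≤ d)
    (g : V → ℝ) (c : ℝ) : X.linkMean α (fun x => g x - c) = X.linkMean α g - c := by
  simp only [linkMean, mul_sub, sum_sub_distrib, ← sum_mul, X.sum_linkPi_singleton hα hd, one_mul]

theorem linkMean_sub_mul_sub {α : Finset V} (hα : α ∈ X.faces) (hd : α.card ≤ d)
    (g h : V → ℝ) (c : ℝ) :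
    X.linkMean α (fun x => (g x - c) * (h x - c)) =
      X.linkMean α (fun x => g x * h x) - c * X.linkMean α h - c * X.linkMean α g + c ^ 2 := by
  have hπ := X.sum_linkPi_singleton hα hd
  simp only [linkMean, mul_sum]
  rw [← mul_one (c ^ 2), ← hπ, mul_sum, ← sum_sub_distrib, ← sum_sub_distrib, ← sum_add_distrib]
  exact sum_congr rfl fun x _ => by ring

theorem downOp_eq_linkMean (g : Finset V → ℝ) (α : Finset V) :
    X.downOp g α = X.linkMean α (fun x => g (insert x α)) := by
  rw [downOp, sum_superfaces_eq_sum_linkVerts, linkMean]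
  refine sum_congr rfl fun x hx => ?_
  rw [X.linkPi_singleton (X.mem_linkVerts.1 hx).1]
  ring

theorem linkPi_mul_linkPi {α : Finset V} {x y : V} (hx : x ∈ X.linkVerts α)
    (hy : y ∈ X.linkVerts (insert x α)) :
    X.linkPi α {x} * X.linkPi (insert x α) {y} =
      X.W (α.card + 2) (insert y (insert x α)) /
        ((α.card + 2) * (α.card + 1) * X.W α.card α) := by
  obtain ⟨hxα, hxX⟩ := X.mem_linkVerts.1 hx
  have hβ := X.W_pos hxX
  rw [X.linkPi_singleton hxα, X.linkPi_singleton (X.mem_linkVerts.1 hy).1,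
    card_insert_of_notMem hxα] at *
  push_cast
  field_simp
  ring

theorem linkPi_pair {α : Finset V} {x y : V} (hx : x ∈ X.linkVerts α)
    (hy : y ∈ X.linkVerts (insert x α)) :
    X.linkPi α {x, y} = 2 * (X.linkPi α {x} * X.linkPi (insert x α) {y}) := by
  obtain ⟨hxα, hxX⟩ := X.mem_linkVerts.1 hx
  obtain ⟨hyxα, -⟩ := X.mem_linkVerts.1 hy
  have hW := X.W_pos (X.down_closed _ hxX α (subset_insert x α))
  have hunion : α ∪ {x, y} = insert y (insert x α) := by
    ext z
    simp only [mem_union, mem_insert, mem_singleton]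
    tauto
  have hcard : (insert y (insert x α)).card = α.card + 2 := by
    rw [card_insert_of_notMem hyxα, card_insert_of_notMem hxα]
  rw [X.linkPi_mul_linkPi hx hy, linkPi, hunion, hcard, Nat.choose_symm_add,
    Nat.cast_choose_two, show ((α.card + 2 : ℕ) : ℝ) - 1 = α.card + 1 by push_cast; ring]
  push_cast
  field_simp

theorem linkVerts_insert (α : Finset V) (x : V) :
    X.linkVerts (insert x α) =
      (X.linkVerts α).filter (fun y => y ≠ x ∧ insert y (insert x α) ∈ X.faces) := by
  ext y
  simp only [mem_filter, mem_linkVerts, mem_insert, not_or]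
  constructor
  · rintro ⟨⟨hyx, hyα⟩, hyX⟩
    refine ⟨⟨hyα, X.down_closed _ hyX _ ?_⟩, hyx, hyX⟩
    rw [insert_comm]
    exact subset_insert x _
  · rintro ⟨⟨hyα, -⟩, hyx, hyX⟩
    exact ⟨⟨hyx, hyα⟩, hyX⟩

theorem linkWalk_eq_linkMean {α : Finset V} {x : V} (hx : x ∈ X.linkVerts α) (g : V → ℝ) :
    X.linkWalk α g x = X.linkMean (insert x α) g := by
  have hπ := X.linkPi_singleton_pos hx
  rw [linkWalk, ← X.linkVerts_insert, linkMean]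
  refine sum_congr rfl fun y hy => ?_
  rw [X.linkPi_pair hx hy]
  field_simp

theorem sum_linkVerts_sum_linkVerts_insert_comm (α : Finset V) (G : V → V → ℝ) :
    ∑ x ∈ X.linkVerts α, ∑ y ∈ X.linkVerts (insert x α), G x y =
      ∑ y ∈ X.linkVerts α, ∑ x ∈ X.linkVerts (insert y α), G x y := by
  refine sum_comm' fun x y => ?_
  simp only [mem_linkVerts, mem_insert, not_or]
  constructor
  · rintro ⟨⟨hxα, -⟩, ⟨hyx, hyα⟩, hyxX⟩
    rw [insert_comm] at hyxX
    exact ⟨⟨⟨Ne.symm hyx, hxα⟩, hyxX⟩, hyα, X.down_closed _ hyxX _ (subset_insert x _)⟩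
  · rintro ⟨⟨⟨hxy, hxα⟩, hxyX⟩, hyα, -⟩
    rw [insert_comm] at hxyX
    exact ⟨⟨hxα, X.down_closed _ hxyX _ (subset_insert y _)⟩, ⟨Ne.symm hxy, hyα⟩, hxyX⟩

theorem linkMean_linkWalk {α : Finset V} (hd : α.card < d) (g : V → ℝ) :
    X.linkMean α (X.linkWalk α g) = X.linkMean α g := by
  set Q : V → V → ℝ := fun x y => X.W (α.card + 2) (insert y (insert x α)) /
    ((α.card + 2) * (α.card + 1) * X.W α.card α)
  have hQ : ∀ x ∈ X.linkVerts α, ∀ y ∈ X.linkVerts (insert x α),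
      X.linkPi α {x} * X.linkPi (insert x α) {y} = Q x y :=
    fun x hx y hy => X.linkPi_mul_linkPi hx hy
  calc X.linkMean α (X.linkWalk α g)
      = ∑ x ∈ X.linkVerts α, ∑ y ∈ X.linkVerts (insert x α), Q x y * g y := by
        refine sum_congr rfl fun x hx => ?_
        rw [X.linkWalk_eq_linkMean hx, linkMean, mul_sum]
        exact sum_congr rfl fun y hy => by rw [← hQ x hx y hy, mul_assoc]
    _ = ∑ y ∈ X.linkVerts α, ∑ x ∈ X.linkVerts (insert y α), Q y x * g y := by
        rw [sum_linkVerts_sum_linkVerts_insert_comm]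
        simp only [Q, insert_comm]
    _ = X.linkMean α g := by
        refine sum_congr rfl fun y hy => ?_
        have hyX := (X.mem_linkVerts.1 hy).2
        have hyd := X.card_insert_of_mem_linkVerts hy
        rw [← sum_mul, ← sum_congr rfl (hQ y hy), ← mul_sum,
          X.sum_linkPi_singleton hyX (by omega), mul_one]

theorem linkInner_self_nonneg (α : Finset V) (g : V → ℝ) : 0 ≤ X.linkInner α g g := by
  rw [linkInner_eq_linkMean]
  exact X.linkMean_nonneg fun x _ => mul_self_nonneg (g x)

theorem linkInner_linkWalk_le {α : Finset V} (hd : α.card < d) (g : V → ℝ) : X.linkInner α g (X.linkWalk α g) ≤ X.linkInner α g g := by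
  have hpt : ∀ x ∈ X.linkVerts α,
      g x * X.linkWalk α g x * 2 ≤ g x * g x + X.linkWalk α (fun y => g y * g y) x := by
    intro x hx
    have hxX := (X.mem_linkVerts.1 hx).2
    have hxd := X.card_insert_of_mem_linkVerts hx
    have hsq := X.linkMean_sub_mul_sub hxX (by omega) g g (g x)
    have hnn : 0 ≤ X.linkMean (insert x α) (fun y => (g y - g x) * (g y - g x)) :=
      X.linkMean_nonneg fun y _ => mul_self_nonneg _
    rw [X.linkWalk_eq_linkMean hx, X.linkWalk_eq_linkMean hx]
    linarith
  have h2 := X.linkMean_mono hpt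
  rw [X.linkMean_mul_const, X.linkMean_add, X.linkMean_linkWalk hd] at h2
  rw [linkInner_eq_linkMean, linkInner_eq_linkMean]
  linarith

theorem linkInner_linkWalk_le_linkLam2_mul {α : Finset V} (hd : α.card < d)
    {g : V → ℝ} (hg : X.linkInner α g (fun _ => 1) = 0) :
    X.linkInner α g (X.linkWalk α g) ≤ X.linkLam2 α * X.linkInner α g g := by
  have hle := X.linkInner_linkWalk_le hd
  rcases (X.linkInner_self_nonneg α g).eq_or_lt with h0 | hpos
  · rw [← h0, mul_zero, h0]
    exact hle g
  · have hbdd : BddAbove { r : ℝ | ∃ f : V → ℝ,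
        X.linkInner α f (fun _ => 1) = 0 ∧ X.linkInner α f f ≠ 0 ∧
        r = X.linkInner α f (X.linkWalk α f) / X.linkInner α f f } := by
      refine ⟨1, ?_⟩
      rintro _ ⟨f, -, -, rfl⟩
      exact div_le_one_of_le₀ (hle f) (X.linkInner_self_nonneg α f)
    have hq : X.linkInner α g (X.linkWalk α g) / X.linkInner α g g ≤ X.linkLam2 α :=
      le_csSup hbdd ⟨g, hg, hpos.ne', rfl⟩
    rwa [div_le_iff₀ hpos] at hq

theorem linkLam2_le_gammaC {α : Finset V} (hα : α ∈ X.faces) :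
    X.linkLam2 α ≤ X.gammaC α.card :=
  le_csSup ((X.faces.image X.linkLam2).bddAbove.mono <| by
    rintro _ ⟨β, hβ, -, rfl⟩
    exact mem_coe.2 (mem_image_of_mem _ hβ)) ⟨α, hα, rfl, rfl⟩

theorem linkInner_linkWalk_sub_sq_le {α : Finset V} (hα : α ∈ X.faces) (hd : α.card < d)
    (g : V → ℝ) :
    X.linkInner α g (X.linkWalk α g) - X.linkMean α g ^ 2 ≤
      X.gammaC α.card * (X.linkInner α g g - X.linkMean α g ^ 2) := by
  set c := X.linkMean α g
  set G : V → ℝ := fun x => g x - c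
  have hG : X.linkInner α G (fun _ => 1) = 0 := by
    simp only [linkInner_eq_linkMean, mul_one, G, X.linkMean_sub_const hα hd.le, c, sub_self]
  have hGG : X.linkInner α G G = X.linkInner α g g - c ^ 2 := by
    rw [linkInner_eq_linkMean, linkInner_eq_linkMean, X.linkMean_sub_mul_sub hα hd.le]
    ring
  have hWG : ∀ x ∈ X.linkVerts α, X.linkWalk α G x = X.linkWalk α g x - c := fun x hx => by
    have hxd := X.card_insert_of_mem_linkVerts hx
    rw [X.linkWalk_eq_linkMean hx, X.linkWalk_eq_linkMean hx,
      X.linkMean_sub_const (X.mem_linkVerts.1 hx).2 (by omega)]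
  have hGWG : X.linkInner α G (X.linkWalk α G) = X.linkInner α g (X.linkWalk α g) - c ^ 2 := by
    rw [linkInner_eq_linkMean, linkInner_eq_linkMean,
      X.linkMean_congr fun x hx => congrArg (G x * ·) (hWG x hx),
      X.linkMean_sub_mul_sub hα hd.le, X.linkMean_linkWalk hd]
    ring
  rw [← hGG, ← hGWG]
  exact (X.linkInner_linkWalk_le_linkLam2_mul hd hG).trans
    (mul_le_mul_of_nonneg_right (X.linkLam2_le_gammaC hα) (X.linkInner_self_nonneg α G))

theorem sum_W_mul_linkMean (m : ℕ) (F : Finset V → Finset V → ℝ) :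
    ∑ α ∈ X.faces.filter (fun α => α.card = m),
        X.W m α * X.linkMean α (fun x => F (insert x α) α) =
      ∑ β ∈ X.faces.filter (fun β => β.card = m + 1),
        X.W (m + 1) β / (m + 1) * ∑ x ∈ β, F β (β.erase x) := by
  calc _ = ∑ α ∈ X.faces.filter (fun α => α.card = m), ∑ x ∈ X.linkVerts α,
          X.W (m + 1) (insert x α) / (m + 1) * F (insert x α) α := by
        refine sum_congr rfl fun α hα => ?_
        obtain ⟨hαX, rfl⟩ := mem_filter.1 hα
        have hW := X.W_pos hαX
        rw [linkMean, mul_sum]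
        refine sum_congr rfl fun x hx => ?_
        rw [X.linkPi_singleton (X.mem_linkVerts.1 hx).1]
        field_simp
    _ = _ := by
        rw [sum_faces_sum_linkVerts]
        refine sum_congr rfl fun β _ => ?_
        rw [mul_sum]
        exact sum_congr rfl fun x hx => by rw [insert_erase hx]

theorem inn_self_eq_sum_linkInner (m : ℕ) (f : Finset V → ℝ) :
    X.inn (m + 1) f f = ∑ α ∈ X.faces.filter (fun α => α.card = m),
      X.W m α * X.linkInner α (fun x => f (insert x α)) (fun x => f (insert x α)) := by
  simp only [linkInner_eq_linkMean]
  rw [X.sum_W_mul_linkMean m fun β _ => f β * f β, inn]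
  refine sum_congr rfl fun β hβ => ?_
  rw [sum_const, (mem_filter.1 hβ).2, nsmul_eq_mul]
  push_cast
  field_simp

theorem inn_downUp_eq_sum_linkMean_sq (m : ℕ) (f : Finset V → ℝ) :
    X.inn (m + 1) f (X.downUp f) = ∑ α ∈ X.faces.filter (fun α => α.card = m),
      X.W m α * X.linkMean α (fun x => f (insert x α)) ^ 2 := by
  have hsq : ∀ α : Finset V, X.linkMean α (fun x => f (insert x α)) ^ 2 =
      X.linkMean α (fun x => f (insert x α) * X.downOp f α) := fun α => by
    rw [X.linkMean_mul_const, downOp_eq_linkMean, sq]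
  simp only [hsq]
  rw [X.sum_W_mul_linkMean m fun β α => f β * X.downOp f α, inn]
  refine sum_congr rfl fun β hβ => ?_
  rw [downUp, upOp, ← mul_sum, (mem_filter.1 hβ).2]
  push_cast
  ring

theorem nonLazy_eq_sum_linkMean {k : ℕ} {β : Finset V} (hβ : β ∈ X.faces) (hk : β.card = k + 1)
    (hd : k < d) (f : Finset V → ℝ) :
    X.nonLazy k f β = 1 / (k + 1) * ∑ x ∈ β, X.linkMean β (fun y => f (insert y (β.erase x))) := by
  have hup : ∀ y ∈ X.linkVerts β, upOp f (insert y β) - 1 / (k + 2) * f β =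
      (∑ x ∈ β, f (insert y (β.erase x))) * (1 / (k + 2)) := by
    intro y hy
    have hyβ := (X.mem_linkVerts.1 hy).1
    rw [upOp, card_insert_of_notMem hyβ, sum_insert hyβ, erase_insert hyβ, hk,
      sum_congr rfl fun x hx => congrArg f (erase_insert_of_ne (ne_of_mem_of_not_mem hx hyβ).symm)]
    push_cast
    ring
  rw [nonLazy, upDown, downOp_eq_linkMean, ← X.linkMean_sub_const hβ (by omega),
    X.linkMean_congr hup, X.linkMean_mul_const, X.linkMean_sum]
  field_simp

theorem inn_nonLazy_eq_sum_linkInner_linkWalk {k : ℕ} (hk : k < d) (f : Finset V → ℝ) :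
    X.inn (k + 1) f (X.nonLazy k f) = ∑ α ∈ X.faces.filter (fun α => α.card = k),
      X.W k α * X.linkInner α (fun x => f (insert x α))
        (X.linkWalk α (fun x => f (insert x α))) := by
  have hloc : ∀ α : Finset V, X.linkInner α (fun x => f (insert x α))
      (X.linkWalk α (fun x => f (insert x α))) =
        X.linkMean α (fun x => f (insert x α) *
          X.linkMean (insert x α) (fun y => f (insert y α))) := fun α => by
    rw [linkInner_eq_linkMean]
    exact X.linkMean_congr fun x hx => by rw [X.linkWalk_eq_linkMean hx]
  simp only [hloc]
  rw [X.sum_W_mul_linkMean k fun β α => f β * X.linkMean β (fun y => f (insert y α)), inn]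
  refine sum_congr rfl fun β hβ => ?_
  obtain ⟨hβX, hβk⟩ := mem_filter.1 hβ
  rw [X.nonLazy_eq_sum_linkMean hβX hβk hk, ← mul_sum]
  ring

theorem inn_sub (m : ℕ) (f g h : Finset V → ℝ) :
    X.inn m f (fun a => g a - h a) = X.inn m f g - X.inn m f h := by
  rw [inn, inn, inn, ← sum_sub_distrib]
  exact sum_congr rfl fun a _ => by ring

end WSC

/-- **Key lemma.** Let `(X, Π)` be a weighted pure `d`-dimensional simplicial
complex and `0 ≤ k ≤ d-1`.  Then `N_k - P∨_k ⪯_{Π_k} γ_{k-1} (I - P∨_k)`: for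
every `f : ℝ^{X(k)}`,
`⟨f, (N_k - P∨_k) f⟩_{Π_k} ≤ γ_{k-1} ⟨f, (I - P∨_k) f⟩_{Π_k}`.
(Here `γ_{k-1} = X.gammaC k`, and functions on `X(k)` are functions on faces of
cardinality `k + 1`.) -/
theorem nonLazy_sub_downUp_le {V : Type*} [DecidableEq V] [Fintype V] {d : ℕ}
    (X : WSC V d) (k : ℕ) (hk : k < d) (f : Finset V → ℝ) :
    X.inn (k + 1) f (fun α => X.nonLazy k f α - X.downUp f α) ≤
      X.gammaC k * X.inn (k + 1) f (fun α => f α - X.downUp f α) := by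
  rw [X.inn_sub, X.inn_sub, X.inn_nonLazy_eq_sum_linkInner_linkWalk hk,
    X.inn_downUp_eq_sum_linkMean_sq, X.inn_self_eq_sum_linkInner, ← sum_sub_distrib,
    ← sum_sub_distrib, mul_sum]
  refine sum_le_sum fun α hα => ?_
  obtain ⟨hαX, rfl⟩ := mem_filter.1 hα
  have hloc := X.linkInner_linkWalk_sub_sq_le hαX hk fun x => f (insert x α)
  linear_combination mul_le_mul_of_nonneg_left hloc (X.W_nonneg α.card α)
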